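/- (Corollary to Serfling's bound) Let x₁, …, x_n be values in [0,1] with average μ_X = (1/n) Σᵢ xᵢ. Let T be a uniformly random subset of {1, …, n} of size t with 0 < t < n, let μ_T = (1/t) Σ_{i∈T} xᵢ, and let μ_K = (1/(n − t)) Σ_{i∉T} xᵢ be the average over the complement K of size k = n − t. Then for any ε > 0, Pr[ μ_K − μ_T ≥ √( (n (t + 1) / (2 t² (n − t))) · ln(1/ε) ) ] ≤ ε. -/

import Mathlib

open Finset Real ProbabilityTheory MeasureTheory

/-!
For a `k`-subset `K` of the indices let `w K = ∑ i ∈ K, (x i - μ_X)` and let `M_k(s)` be the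
average of `exp (s w K)` over all `k`-subsets. A uniform `(k + 1)`-subset is a uniform `k`-subset
`K` plus a uniform index `j ∉ K`, and the values `x j`, `j ∉ K`, have mean `μ_X - w K / (n - k)`.
Hoeffding's lemma for that inner average gives
`M_{k+1}(s) ≤ exp (s² / 8) M_k (s (n - k - 1) / (n - k))`, hence by induction
`M_k(s) ≤ exp (s² k (n - k + 1) / (8 n))`, and Chernoff's bound yields
`Pr [w K ≥ a] ≤ exp (-2 n a² / (k (n - k + 1)))`. For `K = Tᶜ` one has
`μ_K - μ_T = n / (t (n - t)) · w K`, which turns this into the stated bound.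
-/

lemma sum_exp_mul_sub_mean_le_of_fintype {ι : Type*} [Fintype ι] [Nonempty ι] (y : ι → ℝ)
    (hy : ∀ i, y i ∈ Set.Icc (0 : ℝ) 1) (s : ℝ) :
    ∑ i, exp (s * (y i - (∑ j, y j) / Fintype.card ι)) ≤ Fintype.card ι * exp (s ^ 2 / 8) := by
  let _ : MeasurableSpace ι := ⊤
  have : DiscreteMeasurableSpace ι := ⟨fun _ => trivial⟩
  let P := (PMF.uniformOfFintype ι).toMeasure
  have hmean : P[y] = (∑ j, y j) / Fintype.card ι := by
    simp [P, PMF.integral_eq_sum, div_eq_inv_mul, mul_sum]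
  have h := (hasSubgaussianMGF_of_mem_Icc Measurable.of_discrete.aemeasurable
    (ae_of_all P hy)).mgf_le s
  simp only [mgf, P, PMF.integral_eq_sum, hmean, PMF.uniformOfFintype_apply, ENNReal.toReal_inv,
    ENNReal.toReal_natCast, smul_eq_mul, sub_zero, nnnorm_one, one_div, inv_pow, NNReal.coe_inv,
    NNReal.coe_pow, NNReal.coe_ofNat] at h
  rw [← mul_sum, inv_mul_le_iff₀ (by positivity)] at h
  exact h.trans_eq (by ring_nf)

lemma sum_exp_mul_sub_le {ι : Type*} (F : Finset ι) (y : ι → ℝ)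
    (hy : ∀ i ∈ F, y i ∈ Set.Icc (0 : ℝ) 1) (s c : ℝ) :
    ∑ i ∈ F, exp (s * (y i - c)) ≤ #F * exp (s * ((∑ i ∈ F, y i) / #F - c) + s ^ 2 / 8) := by
  rcases F.eq_empty_or_nonempty with rfl | hF
  · simp
  have : Nonempty F := hF.to_subtype
  have h := sum_exp_mul_sub_mean_le_of_fintype (fun i : F => y i) (fun i => hy i i.2) s
  rw [Fintype.card_coe, sum_coe_sort F y,
    sum_coe_sort F (fun i => exp (s * (y i - (∑ j ∈ F, y j) / #F)))] at h
  set m := (∑ j ∈ F, y j) / #F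
  calc ∑ i ∈ F, exp (s * (y i - c)) = (∑ i ∈ F, exp (s * (y i - m))) * exp (s * (m - c)) := by
        rw [sum_mul]; congr! 1 with i; rw [← exp_add]; ring_nf
    _ ≤ #F * exp (s ^ 2 / 8) * exp (s * (m - c)) := by gcongr
    _ = #F * exp (s * (m - c) + s ^ 2 / 8) := by rw [exp_add]; ring

lemma succ_nsmul_sum_powersetCard_succ {α M : Type*} [Fintype α] [DecidableEq α]
    [AddCommMonoid M] (m : ℕ) (f : Finset α → M) :
    (m + 1) • ∑ L ∈ powersetCard (m + 1) univ, f L =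
      ∑ K ∈ powersetCard m univ, ∑ j ∈ Kᶜ, f (insert j K) := by
  calc (m + 1) • ∑ L ∈ powersetCard (m + 1) univ, f L
      = ∑ L ∈ powersetCard (m + 1) univ, ∑ _j ∈ L, f L := by
        rw [smul_sum]
        refine sum_congr rfl fun L hL => ?_
        rw [sum_const, (mem_powersetCard.mp hL).2]
    _ = ∑ K ∈ powersetCard m univ, ∑ j ∈ Kᶜ, f (insert j K) := by
      rw [sum_sigma', sum_sigma']
      refine sum_nbij' (fun p => ⟨p.1.erase p.2, p.2⟩) (fun p => ⟨insert p.2 p.1, p.2⟩)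
        ?_ ?_ ?_ ?_ ?_ <;> rintro ⟨K, j⟩ hp <;>
        simp only [mem_sigma, mem_powersetCard, mem_compl] at hp
      · simp [hp.2, card_erase_of_mem, hp.1.2]
      · simp [hp.2, card_insert_of_notMem, hp.1.2]
      · simp [insert_erase hp.2]
      · simp [erase_insert hp.2]
      · simp [insert_erase hp.2]

lemma card_filter_mul_exp_le_sum_exp {α : Type*} (S : Finset α) (f : α → ℝ) (a : ℝ) {s : ℝ}
    (hs : 0 ≤ s) : #{K ∈ S | a ≤ f K} * exp (s * a) ≤ ∑ K ∈ S, exp (s * f K) := by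
  rw [← nsmul_eq_mul]
  calc #{K ∈ S | a ≤ f K} • exp (s * a) ≤ ∑ K ∈ S with a ≤ f K, exp (s * f K) :=
        card_nsmul_le_sum _ _ _ fun K hK => by gcongr; exact (mem_filter.mp hK).2
    _ ≤ ∑ K ∈ S, exp (s * f K) :=
        sum_le_sum_of_subset_of_nonneg (filter_subset _ _) fun _ _ _ => (exp_pos _).le

lemma card_filter_compl_eq {α : Type*} [Fintype α] [DecidableEq α] {t : ℕ}
    (ht : t ≤ Fintype.card α) (P : Finset α → Prop) [DecidablePred P] :
    #{T : {s : Finset α // #s = t} | P T.1ᶜ} =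
      #{K ∈ powersetCard (Fintype.card α - t) univ | P K} := by
  refine card_bij (fun T _ => T.1ᶜ) ?_ ?_ ?_
  · rintro ⟨T, hT⟩ hP
    simp_all [card_compl]
  · rintro ⟨T₁, _⟩ _ ⟨T₂, _⟩ _ h
    simpa using h
  · intro K hK
    simp only [mem_filter, mem_powersetCard] at hK
    refine ⟨⟨Kᶜ, ?_⟩, by simpa using hK.2, compl_compl K⟩
    rw [card_compl, hK.1.2]
    omega

lemma exp_neg_sq_sqrt_mul_log_div_le {b ε : ℝ} (hb : 0 < b) (hε : 0 < ε) :
    exp (-(√(b * log (1 / ε)) ^ 2 / b)) ≤ ε := by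
  calc exp (-(√(b * log (1 / ε)) ^ 2 / b)) ≤ exp (-(b * log (1 / ε) / b)) := by
        -- for `ε > 1` the radicand is negative and `√` returns `0`, hence `max`
        rw [sq_sqrt']; gcongr; exact le_max_left _ _
    _ = ε := by rw [mul_div_cancel_left₀ _ hb.ne', one_div, log_inv, neg_neg, exp_log hε]

noncomputable def centeredSum {n : ℕ} (x : Fin n → ℝ) (K : Finset (Fin n)) : ℝ :=
  ∑ i ∈ K, (x i - (∑ j, x j) / n)

section CenteredSum

variable {n : ℕ} (x : Fin n → ℝ)

lemma centeredSum_eq {K : Finset (Fin n)} :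
    centeredSum x K = ∑ i ∈ K, x i - #K * ((∑ j, x j) / n) := by
  rw [centeredSum, sum_sub_distrib, sum_const, nsmul_eq_mul]

lemma sum_compl_div_card_sub_mean {K : Finset (Fin n)} (hK : #K < n) :
    (∑ i ∈ Kᶜ, x i) / #Kᶜ - (∑ j, x j) / n = -centeredSum x K / (n - #K) := by
  have hcard : (#Kᶜ : ℝ) = n - #K := by
    rw [card_compl, Fintype.card_fin, Nat.cast_sub hK.le]
  have hn : (0 : ℝ) < n - #K := by rw [sub_pos]; exact_mod_cast hK
  have hn' : (n : ℝ) ≠ 0 := Nat.cast_ne_zero.mpr (by omega)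
  rw [hcard, centeredSum_eq, ← sum_compl_add_sum K x]
  field_simp
  ring

lemma succ_mul_sum_exp_centeredSum_le (hx : ∀ i, x i ∈ Set.Icc (0 : ℝ) 1) {k : ℕ} (hk : k < n)
    (s : ℝ) :
    (k + 1) * ∑ L ∈ powersetCard (k + 1) univ, exp (s * centeredSum x L) ≤
      (n - k) * exp (s ^ 2 / 8) *
        ∑ K ∈ powersetCard k univ, exp (s * ((n - k - 1) / (n - k)) * centeredSum x K) := by
  have hnk : (0 : ℝ) < n - k := by rw [sub_pos]; exact_mod_cast hk
  have hstep : ∀ K ∈ powersetCard k (univ : Finset (Fin n)),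
      ∑ j ∈ Kᶜ, exp (s * centeredSum x (insert j K)) ≤
        (n - k) * exp (s ^ 2 / 8) * exp (s * ((n - k - 1) / (n - k)) * centeredSum x K) := by
    intro K hK
    have hKk : #K = k := (mem_powersetCard.mp hK).2
    have hcard : (#Kᶜ : ℝ) = n - k := by
      rw [card_compl, Fintype.card_fin, hKk, Nat.cast_sub hk.le]
    calc ∑ j ∈ Kᶜ, exp (s * centeredSum x (insert j K))
        = (∑ j ∈ Kᶜ, exp (s * (x j - (∑ i, x i) / n))) * exp (s * centeredSum x K) := by
          rw [sum_mul]
          refine sum_congr rfl fun j hj => ?_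
          rw [centeredSum, sum_insert (mem_compl.mp hj), ← exp_add, centeredSum, mul_add]
      _ ≤ (#Kᶜ * exp (s * ((∑ i ∈ Kᶜ, x i) / #Kᶜ - (∑ i, x i) / n) + s ^ 2 / 8)) *
            exp (s * centeredSum x K) := by
          gcongr
          exact sum_exp_mul_sub_le _ x (fun i _ => hx i) s _
      _ = (n - k) * exp (s ^ 2 / 8) * exp (s * ((n - k - 1) / (n - k)) * centeredSum x K) := by
          rw [sum_compl_div_card_sub_mean x (by omega), hcard, hKk, mul_assoc, mul_assoc,
            ← exp_add, ← exp_add]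
          congr 2
          field_simp
          ring
  have hcount := succ_nsmul_sum_powersetCard_succ k (fun L => exp (s * centeredSum x L))
  rw [nsmul_eq_mul, Nat.cast_succ] at hcount
  rw [hcount, mul_sum]
  exact sum_le_sum hstep

theorem sum_exp_centeredSum_le (hx : ∀ i, x i ∈ Set.Icc (0 : ℝ) 1) {k : ℕ} (hk : k ≤ n) (s : ℝ) :
    ∑ K ∈ powersetCard k univ, exp (s * centeredSum x K) ≤
      n.choose k * exp (s ^ 2 * (k * (n - k + 1)) / (8 * n)) := by
  induction k generalizing s with
  | zero => simp [centeredSum]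
  | succ k ih =>
    have hkn : k < n := hk
    have hnk : (1 : ℝ) ≤ n - k := by
      rw [le_sub_iff_add_le']; exact_mod_cast hk
    have hn : (0 : ℝ) < n := by exact_mod_cast (k.zero_le.trans_lt hkn)
    set s' := s * ((n - k - 1) / (n - k)) with hs'
    have hchoose : ((n - k : ℝ)) * n.choose k = (k + 1) * n.choose (k + 1) := by
      have h := Nat.choose_succ_right_eq n k
      rw [← Nat.cast_sub hkn.le]
      exact_mod_cast (by linarith [h] : (n - k) * n.choose k = (k + 1) * n.choose (k + 1))
    have hexp : s ^ 2 / 8 + s' ^ 2 * (k * (n - k + 1)) / (8 * n) ≤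
        s ^ 2 * ((k + 1) * (n - (k + 1) + 1)) / (8 * n) := by
      have hgap : s ^ 2 * ((k + 1) * (n - (k + 1) + 1)) / (8 * n) -
          (s ^ 2 / 8 + s' ^ 2 * (k * (n - k + 1)) / (8 * n)) =
          s ^ 2 * k * (n - k - 1) / (8 * n * (n - k) ^ 2) := by
        rw [hs']
        field_simp
        ring
      have : 0 ≤ s ^ 2 * k * (n - k - 1) / (8 * n * (n - k) ^ 2) := by
        apply div_nonneg _ (by positivity)
        exact mul_nonneg (by positivity) (by linarith)
      linarith
    refine le_of_mul_le_mul_left ?_ (by positivity : (0 : ℝ) < k + 1)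
    push_cast
    calc (k + 1) * ∑ L ∈ powersetCard (k + 1) univ, exp (s * centeredSum x L)
        ≤ (n - k) * exp (s ^ 2 / 8) * ∑ K ∈ powersetCard k univ, exp (s' * centeredSum x K) :=
          succ_mul_sum_exp_centeredSum_le x hx hkn s
      _ ≤ (n - k) * exp (s ^ 2 / 8) *
            (n.choose k * exp (s' ^ 2 * (k * (n - k + 1)) / (8 * n))) := by
          gcongr
          exact ih hkn.le s'
      _ = (k + 1) * (n.choose (k + 1) *
            exp (s ^ 2 / 8 + s' ^ 2 * (k * (n - k + 1)) / (8 * n))) := by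
          rw [exp_add]; linear_combination exp (s ^ 2 / 8) *
            exp (s' ^ 2 * (k * (n - k + 1)) / (8 * n)) * hchoose
      _ ≤ (k + 1) * (n.choose (k + 1) * exp (s ^ 2 * ((k + 1) * (n - (k + 1) + 1)) / (8 * n))) := by
          gcongr

theorem card_centeredSum_ge_le (hx : ∀ i, x i ∈ Set.Icc (0 : ℝ) 1) {k : ℕ} (hk : 0 < k)
    (hkn : k ≤ n) {a : ℝ} (ha : 0 ≤ a) :
    #{K ∈ powersetCard k univ | a ≤ centeredSum x K} ≤
      n.choose k * exp (-(2 * n * a ^ 2 / (k * (n - k + 1)))) := by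
  have hn : (0 : ℝ) < n := by exact_mod_cast hk.trans_le hkn
  have hM : (0 : ℝ) < k * (n - k + 1) := by
    have : (k : ℝ) ≤ n := by exact_mod_cast hkn
    have : (0 : ℝ) < k := by exact_mod_cast hk
    nlinarith
  -- the minimiser of `s ↦ s² k (n - k + 1) / (8 n) - s a`
  set s := 4 * n * a / (k * (n - k + 1)) with hs
  have hexp : s ^ 2 * (k * (n - k + 1)) / (8 * n) - s * a =
      -(2 * n * a ^ 2 / (k * (n - k + 1))) := by
    rw [hs]; field_simp; ring
  rw [← hexp, exp_sub, ← mul_div_assoc, le_div_iff₀ (exp_pos _)]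
  exact (card_filter_mul_exp_le_sum_exp _ _ a (by positivity)).trans
    (sum_exp_centeredSum_le x hx hkn s)

lemma avg_compl_sub_avg_eq {t : ℕ} (ht : 0 < t) (htn : t < n) {T : Finset (Fin n)} (hT : #T = t) :
    1 / ((n : ℝ) - t) * ∑ i ∈ Tᶜ, x i - 1 / t * ∑ i ∈ T, x i =
      n / (t * (n - t)) * centeredSum x Tᶜ := by
  have hnt : (0 : ℝ) < n - t := by rw [sub_pos]; exact_mod_cast htn
  have ht' : (0 : ℝ) < t := by exact_mod_cast ht
  have hn : (n : ℝ) ≠ 0 := Nat.cast_ne_zero.mpr (by omega)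
  have hcard : (#Tᶜ : ℝ) = n - t := by rw [card_compl, Fintype.card_fin, hT, Nat.cast_sub htn.le]
  rw [centeredSum_eq, hcard, ← sum_compl_add_sum T x]
  field_simp
  ring

theorem card_avg_compl_sub_avg_ge_le (hx : ∀ i, x i ∈ Set.Icc (0 : ℝ) 1) {t : ℕ} (ht : 0 < t)
    (htn : t < n) {ν : ℝ} (hν : 0 ≤ ν) :
    #{T : {s : Finset (Fin n) // #s = t} |
        1 / ((n : ℝ) - t) * ∑ i ∈ T.1ᶜ, x i - 1 / t * ∑ i ∈ T.1, x i ≥ ν} ≤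
      n.choose t * exp (-(2 * t ^ 2 * (n - t) * ν ^ 2 / (n * (t + 1)))) := by
  have hnt : (0 : ℝ) < n - t := by rw [sub_pos]; exact_mod_cast htn
  have ht' : (0 : ℝ) < t := by exact_mod_cast ht
  have hn : (0 : ℝ) < n := by exact_mod_cast ht.trans htn
  have hevent : ∀ T : {s : Finset (Fin n) // #s = t},
      1 / ((n : ℝ) - t) * ∑ i ∈ T.1ᶜ, x i - 1 / t * ∑ i ∈ T.1, x i ≥ ν ↔
        t * (n - t) * ν / n ≤ centeredSum x T.1ᶜ := by
    intro T
    rw [avg_compl_sub_avg_eq x ht htn T.2, ge_iff_le, div_le_iff₀ hn,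
      ← le_div_iff₀' (by positivity)]
    exact iff_of_eq (by ring_nf)
  rw [filter_congr fun T _ => hevent T,
    card_filter_compl_eq (by simpa using htn.le) (fun K => t * (n - t) * ν / n ≤ centeredSum x K),
    Fintype.card_fin, ← Nat.choose_symm htn.le]
  convert card_centeredSum_ge_le x hx (Nat.sub_pos_of_lt htn) (Nat.sub_le n t)
    (by positivity : 0 ≤ t * (n - t) * ν / n) using 4
  push_cast [htn.le]
  field_simp
  ring

end CenteredSum

theorem stmt_12 (n t : ℕ) (ht : 0 < t) (htn : t < n)
    (x : Fin n → ℝ) (hx : ∀ i, x i ∈ Set.Icc (0 : ℝ) 1)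
    (ε : ℝ) (hε : 0 < ε) :
    ((Finset.univ.filter
        (fun T : {s : Finset (Fin n) // s.card = t} =>
          (1 / ((n : ℝ) - t)) * ∑ i ∈ T.1ᶜ, x i - (1 / t) * ∑ i ∈ T.1, x i ≥
            Real.sqrt ((n * (t + 1) / (2 * t ^ 2 * ((n : ℝ) - t))) *
              Real.log (1 / ε)))).card : ℝ) /
      ((Finset.univ : Finset {s : Finset (Fin n) // s.card = t}).card : ℝ)
      ≤ ε := by
  have hnt : (0 : ℝ) < n - t := by rw [sub_pos]; exact_mod_cast htn
  have ht' : (0 : ℝ) < t := by exact_mod_cast ht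
  have hn : (0 : ℝ) < n := by exact_mod_cast ht.trans htn
  set b : ℝ := n * (t + 1) / (2 * t ^ 2 * (n - t)) with hbdef
  have hb : 0 < b := by positivity
  rw [card_univ, Fintype.card_finset_len, Fintype.card_fin,
    div_le_iff₀ (by exact_mod_cast Nat.choose_pos htn.le)]
  calc _ ≤ n.choose t * exp (-(2 * t ^ 2 * (n - t) * √(b * log (1 / ε)) ^ 2 / (n * (t + 1)))) :=
        card_avg_compl_sub_avg_ge_le x hx ht htn (sqrt_nonneg _)
    _ = n.choose t * exp (-(√(b * log (1 / ε)) ^ 2 / b)) := by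
        congr 3; rw [hbdef]; field_simp
    _ ≤ ε * n.choose t := by
        rw [mul_comm]; gcongr; exact exp_neg_sq_sqrt_mul_log_div_le hb hε
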